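/- Suppose 𝔨 is maximal among toral subalgebras over 𝔥, i.e. every Lie subalgebra 𝔨' of 𝔤 with 𝔨 ⊆ 𝔨' and [𝔨',𝔨'] ⊆ 𝔥 satisfies 𝔨' = 𝔨. Then the only element X ∈ 𝔫 satisfying [k, X] = 0 for all k ∈ 𝔨 is X = 0; in particular, 𝔫 contains no nonzero subspace on which ad(𝔨) acts trivially. -/

import Mathlib

open scoped RealInnerProductSpace

noncomputable section

variable {G : Type*} [NormedAddCommGroup G] [InnerProductSpace ℝ G] [FiniteDimensional ℝ G]

/-- Orthogonal projection onto the subspace `W`, as a plain map `G → G`. -/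
def pr (W : Submodule ℝ G) : G → G := fun v => (W.orthogonalProjectionOnto v : G)

/-- Orthogonal projection onto the subspace `W`, as a continuous linear endomorphism of `G`. -/
def projL (W : Submodule ℝ G) : G →L[ℝ] G := W.subtypeL.comp (W.orthogonalProjectionOnto)

variable (br : G →ₗ[ℝ] G →ₗ[ℝ] G)

/-- `br` is a Lie bracket making `G` a real Lie algebra, and the inner product `Q` of `G`
is ad-invariant: `Q([Z,X],Y) + Q(X,[Z,Y]) = 0`. -/
structure IsLieQ : Prop where
  alt : ∀ x : G, br x x = 0
  jacobi : ∀ x y z : G, br x (br y z) + br y (br z x) + br z (br x y) = 0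
  adInv : ∀ Z X Y : G, ⟪br Z X, Y⟫ + ⟪X, br Z Y⟫ = 0

/-- `𝔥 ⊆ 𝔨` are Lie subalgebras of `𝔤` with `[𝔨,𝔨] ⊆ 𝔥`. -/
structure IsToralPair (𝔥 𝔨 : Submodule ℝ G) : Prop where
  subalg_h : ∀ x ∈ 𝔥, ∀ y ∈ 𝔥, br x y ∈ 𝔥
  subalg_k : ∀ x ∈ 𝔨, ∀ y ∈ 𝔨, br x y ∈ 𝔨
  h_le_k : 𝔥 ≤ 𝔨
  bk_in_h : ∀ x ∈ 𝔨, ∀ y ∈ 𝔨, br x y ∈ 𝔥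

theorem LinearMap.IsAlt.apply_mem_of_mem_sup_span_singleton {R M : Type*} [CommSemiring R]
    [AddCommGroup M] [Module R M] {B : M →ₗ[R] M →ₗ[R] M} (hB : B.IsAlt)
    {𝔞 𝔟 : Submodule R M} (h𝔞 : ∀ x ∈ 𝔞, ∀ y ∈ 𝔞, B x y ∈ 𝔟) {X : M}
    (hX : ∀ a ∈ 𝔞, B a X = 0) {x y : M} (hx : x ∈ 𝔞 ⊔ R ∙ X) (hy : y ∈ 𝔞 ⊔ R ∙ X) :
    B x y ∈ 𝔟 := by
  obtain ⟨a, ha, _, hc, rfl⟩ := Submodule.mem_sup.mp hx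
  obtain ⟨b, hb, _, hd, rfl⟩ := Submodule.mem_sup.mp hy
  obtain ⟨c, rfl⟩ := Submodule.mem_span_singleton.mp hc
  obtain ⟨d, rfl⟩ := Submodule.mem_span_singleton.mp hd
  have hXb : B X b = 0 := hB.eq_iff.mp (hX b hb)
  simpa [hX a ha, hXb, hB.self_eq_zero X] using h𝔞 a ha b hb

theorem maximal_toral_no_trivial_submodule
    (hLie : IsLieQ br) (𝔥 𝔨 : Submodule ℝ G) (hpair : IsToralPair br 𝔥 𝔨)
    (hmax : ∀ 𝔨' : Submodule ℝ G, (∀ x ∈ 𝔨', ∀ y ∈ 𝔨', br x y ∈ 𝔨') →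
      𝔨 ≤ 𝔨' → (∀ x ∈ 𝔨', ∀ y ∈ 𝔨', br x y ∈ 𝔥) → 𝔨' = 𝔨)
    (X : G) (hX : X ∈ 𝔨ᗮ) (hcomm : ∀ k ∈ 𝔨, br k X = 0) :
    X = 0 := by
  have hbr_h : ∀ x ∈ 𝔨 ⊔ ℝ ∙ X, ∀ y ∈ 𝔨 ⊔ ℝ ∙ X, br x y ∈ 𝔥 := fun x hx y hy =>
    LinearMap.IsAlt.apply_mem_of_mem_sup_span_singleton hLie.alt hpair.bk_in_h hcomm hx hy
  have hsup : 𝔨 ⊔ ℝ ∙ X = 𝔨 := hmax _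
    (fun x hx y hy => Submodule.mem_sup_left (hpair.h_le_k (hbr_h x hx y hy))) le_sup_left hbr_h
  have hXk : X ∈ 𝔨 := hsup ▸ Submodule.mem_sup_right (Submodule.mem_span_singleton_self X)
  exact (Submodule.disjoint_def.mp 𝔨.orthogonal_disjoint) X hXk hX
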